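/- arXiv:2601.19655 — 7 statements merged into one kernel-verified Lean document; each statement's English description precedes it below -/
import Mathlib

section
/- Let A be a commutative ring and let I ⊆ A be an ideal that is flat as an A-module and satisfies I² = I. Then for any A-module M, the tensor product I ⊗_A M is the zero module if and only if I • M = 0 (i.e., a·m = 0 for all a ∈ I, m ∈ M). -/
open TensorProduct

/-- Let `A` be a commutative ring and `I ⊆ A` an ideal that is flat as an `A`-module and
satisfies `I * I = I`.  For any `A`-module `M`, the tensor product `I ⊗[A] M` is the zero
module if and only if `I • M = 0`, i.e. `a • m = 0` for all `a ∈ I` and `m ∈ M`. -/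
theorem tensor_subsingleton_iff_smul_eq_zero (A : Type*) [CommRing A] (I : Ideal A)
    (hflat : Module.Flat A I) (hI : I * I = I)
    (M : Type*) [AddCommGroup M] [Module A M] :
    Subsingleton (TensorProduct A I M) ↔ ∀ a ∈ I, ∀ m : M, a • m = 0 := by
  constructor
  · intro h a ha m
    have h1 : (TensorProduct.lift ((LinearMap.lsmul A M).comp (Submodule.subtype I)))
        ((⟨a, ha⟩ : I) ⊗ₜ[A] m) = a • m := by simp
    rw [← h1, Subsingleton.elim ((⟨a, ha⟩ : I) ⊗ₜ[A] m) 0, map_zero]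
  · intro h
    refine subsingleton_of_forall_eq 0 fun z => ?_
    induction z using TensorProduct.induction_on with
    | zero => rfl
    | add x y hx hy => rw [hx, hy, add_zero]
    | tmul a m =>
      obtain ⟨a, ha⟩ := a
      have ha' : a ∈ I * I := hI.symm ▸ ha
      have key : ∀ x (hx : x ∈ I * I), ((⟨x, hI ▸ hx⟩ : I) ⊗ₜ[A] m : TensorProduct A I M) = 0 := by
        intro x hx
        induction hx using Submodule.mul_induction_on' with
        | mem_mul_mem r hr s hs =>
          have : (⟨r * s, hI ▸ Submodule.mul_mem_mul hr hs⟩ : I) = s • (⟨r, hr⟩ : I) := by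
            ext; simp [mul_comm]
          rw [this, TensorProduct.smul_tmul, h s hs m, TensorProduct.tmul_zero]
        | add x hx y hy ihx ihy =>
          have : (⟨x + y, hI ▸ Submodule.add_mem _ hx hy⟩ : I)
              = (⟨x, hI ▸ hx⟩ : I) + (⟨y, hI ▸ hy⟩ : I) := rfl
          rw [this, TensorProduct.add_tmul, ihx, ihy, add_zero]
      exact key a ha'
end

section
/- Let A be a commutative ring and let I ⊆ A be an ideal that is flat as an A-module and satisfies I² = I. Let M be an A-module such that the multiplication map I ⊗_A M → M, x ⊗ m ↦ x·m, is an isomorphism. Then the evaluation map I ⊗_A Hom_A(I, M) → M, sending x ⊗ f to f(x), is an isomorphism of A-modules. -/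
open TensorProduct

/-- Let `A` be a commutative ring and `I ⊆ A` an ideal that is flat as an `A`-module and
satisfies `I * I = I`.  Let `M` be an `A`-module such that the multiplication map
`I ⊗[A] M → M`, `x ⊗ m ↦ x • m`, is an isomorphism.  Then the evaluation map
`I ⊗[A] Hom_A(I, M) → M`, `x ⊗ f ↦ f x`, is an isomorphism of `A`-modules. -/
theorem eval_bijective_of_smul_bijective (A : Type*) [CommRing A] (I : Ideal A)
    (hflat : Module.Flat A I) (hI : I * I = I)
    (M : Type*) [AddCommGroup M] [Module A M]
    (hM : Function.Bijective
      (TensorProduct.lift (LinearMap.lsmul A M ∘ₗ I.subtype) : TensorProduct A I M →ₗ[A] M)) :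
    Function.Bijective
      (TensorProduct.lift (LinearMap.applyₗ (R := A) (M := I) (M₂ := M)) :
        TensorProduct A I (I →ₗ[A] M) →ₗ[A] M) := by
  set e : TensorProduct A I M →ₗ[A] M :=
    TensorProduct.lift (LinearMap.lsmul A M ∘ₗ I.subtype) with he
  set L : TensorProduct A I (I →ₗ[A] M) →ₗ[A] M :=
    TensorProduct.lift (LinearMap.applyₗ (R := A) (M := I) (M₂ := M)) with hL
  set φ : M →ₗ[A] (I →ₗ[A] M) := ((LinearMap.lsmul A M).comp I.subtype).flip with hφ
  set Φ : TensorProduct A I M →ₗ[A] TensorProduct A I (I →ₗ[A] M) :=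
    LinearMap.lTensor I φ with hΦ
  have key : L ∘ₗ Φ = e := by
    ext x m
    simp [hL, hΦ, hφ, he]
  have hmul : ∀ (x : A) (hx : x ∈ I * I) (f : I →ₗ[A] M),
      ∃ a, Φ a = (⟨x, hI ▸ hx⟩ : I) ⊗ₜ[A] f := by
    intro x hx f
    induction hx using Submodule.mul_induction_on' with
    | mem_mul_mem a ha b hb =>
      refine ⟨(⟨a, ha⟩ : I) ⊗ₜ f ⟨b, hb⟩, ?_⟩
      have h1 : φ (f ⟨b, hb⟩) = b • f := by
        ext y
        simp only [hφ, LinearMap.flip_apply, LinearMap.coe_comp, Function.comp_apply,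
          LinearMap.lsmul_apply, Submodule.coe_subtype, LinearMap.smul_apply]
        rw [← map_smul, ← map_smul]
        congr 1
        ext
        simp [mul_comm]
      have h2 : (⟨a * b, hI ▸ Submodule.mul_mem_mul ha hb⟩ : I) = b • (⟨a, ha⟩ : I) := by
        ext; simp [mul_comm]
      rw [hΦ]
      simp only [LinearMap.lTensor_tmul, h1, h2, smul_tmul, tmul_smul]
    | add x hx y hy ihx ihy =>
      obtain ⟨u, hu⟩ := ihx
      obtain ⟨v, hv⟩ := ihy
      refine ⟨u + v, ?_⟩
      rw [map_add, hu, hv, ← add_tmul]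
      exact congrArg (· ⊗ₜ[A] f) (Subtype.ext rfl)
  have hsurj : Function.Surjective Φ := by
    intro t
    induction t using TensorProduct.induction_on with
    | zero => exact ⟨0, map_zero _⟩
    | add a b ha hb =>
      obtain ⟨u, hu⟩ := ha
      obtain ⟨v, hv⟩ := hb
      exact ⟨u + v, by rw [map_add, hu, hv]⟩
    | tmul x f =>
      obtain ⟨x, hx⟩ := x
      exact hmul x (hI.symm ▸ hx) f
  constructor
  · intro a b hab
    obtain ⟨u, rfl⟩ := hsurj a
    obtain ⟨v, rfl⟩ := hsurj b
    have : e u = e v := by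
      rw [← key] at *
      simpa using hab
    rw [hM.injective this]
  · intro m
    obtain ⟨u, hu⟩ := hM.surjective m
    exact ⟨Φ u, by rw [← hu, ← key]; rfl⟩
end

section
/- Let p be a prime and let K be a field with a nontrivial nonarchimedean multiplicative norm ‖·‖ : K → ℝ≥0. Let K° = {x ∈ K : ‖x‖ ≤ 1} and 𝔪 = {x ∈ K : ‖x‖ < 1}. Assume K is spherically complete (every chain of closed balls in K has nonempty intersection) and that there is a sequence (π_n)_{n≥0} in K° with 0 < ‖π_0‖ < 1, π_{n+1}^p = π_n for all n, and 𝔪 = ⋃_n π_n K°. Then every K°-linear map f : 𝔪 → K/𝔪 lifts to a K°-linear map g : 𝔪 → K, i.e. the composition of g with the quotient map K → K/𝔪 equals f. -/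
/-!
Choose lifts `b n ∈ K` of `f (π n)`. Since `π n = (π n / π (n + 1)) * π (n + 1)` with
`π n / π (n + 1) ∈ K°`, the points `b n / π n` satisfy
`v (b (n + 1) / π (n + 1) - b n / π n) < (v (π n))⁻¹`, so the open balls of radius
`(v (π n))⁻¹` around them are nested. Their radii strictly decrease, because
`v (π n) = v (π (n + 1)) ^ p < v (π (n + 1))`, so each open ball can be shrunk to a closed one
keeping the chain nested. Spherical completeness gives a common point `c`, and `g x = c * x`
lifts `f` because the `π n` generate `𝔪`.
-/

/-- The maximal ideal `𝔪 = {x ∈ K : ‖x‖ < 1}` of the valuation ring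
`K° = {x ∈ K : ‖x‖ ≤ 1}`, regarded as a `K°`-submodule of `K`. -/
def maxIdealSubmodule {K : Type*} [Field K] (v : Valuation K NNReal) :
    Submodule v.integer K where
  carrier := {x : K | v x < 1}
  add_mem' := fun {a b} ha hb => lt_of_le_of_lt (v.map_add a b) (max_lt ha hb)
  zero_mem' := by simp
  smul_mem' := fun c x hx => by
    have hc : v (c : K) ≤ 1 := c.2
    have : v ((c : K) * x) < 1 := by
      calc v ((c : K) * x) = v (c : K) * v x := v.map_mul _ _
        _ ≤ 1 * v x := by gcongr
        _ = v x := one_mul _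
        _ < 1 := hx
    simpa [Subring.smul_def] using this

/-- `K` is spherically complete: every family of closed balls that is totally ordered by
inclusion has nonempty intersection. -/
def SphericallyComplete {K : Type*} [Field K] (v : Valuation K NNReal) : Prop :=
  ∀ 𝒞 : Set (Set K), (∀ B ∈ 𝒞, ∃ (c : K) (r : NNReal), B = {x : K | v (x - c) ≤ r}) →
    IsChain (· ⊆ ·) 𝒞 → (⋂₀ 𝒞).Nonempty

open scoped NNReal

lemma NNReal.mem_Ioo_of_pow_succ_eq {a : ℕ → ℝ≥0} {p : ℕ} (hp : p ≠ 0)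
    (ha : ∀ n, a (n + 1) ^ p = a n) (h0 : a 0 ∈ Set.Ioo 0 1) (n : ℕ) : a n ∈ Set.Ioo 0 1 := by
  induction n with
  | zero => exact h0
  | succ n ih =>
    rw [← ha n] at ih
    exact ⟨(pow_pos_iff hp).mp ih.1, (pow_lt_one_iff hp).mp ih.2⟩

lemma NNReal.strictMono_of_pow_succ_eq {a : ℕ → ℝ≥0} {p : ℕ} (hp : 1 < p)
    (ha : ∀ n, a (n + 1) ^ p = a n) (h0 : a 0 ∈ Set.Ioo 0 1) : StrictMono a :=
  strictMono_nat_of_lt_succ fun n => by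
    obtain ⟨hpos, hlt⟩ := mem_Ioo_of_pow_succ_eq (by omega) ha h0 (n + 1)
    simpa only [ha n] using pow_lt_self_of_lt_one₀ hpos hlt hp

section SphericallyComplete

variable {K : Type*} [Field K] {v : Valuation K ℝ≥0}

theorem SphericallyComplete.exists_forall_sub_le (hsc : SphericallyComplete v) {x : ℕ → K}
    {s : ℕ → ℝ≥0} (hs : Antitone s) (hx : ∀ n, v (x (n + 1) - x n) ≤ s n) :
    ∃ c, ∀ n, v (c - x n) ≤ s n := by
  set B : ℕ → Set K := fun n => {y | v (y - x n) ≤ s n}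
  have hB : Antitone B := antitone_nat_of_succ_le fun n y (hy : v (y - x (n + 1)) ≤ s (n + 1)) =>
    calc v (y - x n) = v ((y - x (n + 1)) + (x (n + 1) - x n)) := by rw [sub_add_sub_cancel]
      _ ≤ max (v (y - x (n + 1))) (v (x (n + 1) - x n)) := v.map_add _ _
      _ ≤ s n := max_le (hy.trans (hs n.le_succ)) (hx n)
  obtain ⟨c, hc⟩ := hsc (Set.range B) (by rintro _ ⟨n, rfl⟩; exact ⟨x n, s n, rfl⟩)
    (Monotone.isChain_range (β := (Set K)ᵒᵈ) hB).symm
  exact ⟨c, fun n => hc _ ⟨n, rfl⟩⟩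

theorem SphericallyComplete.exists_forall_sub_lt (hsc : SphericallyComplete v) {x : ℕ → K}
    {r : ℕ → ℝ≥0} (hr : StrictAnti r) (hx : ∀ n, v (x (n + 1) - x n) < r n) :
    ∃ c, ∀ n, v (c - x n) < r n := by
  set s : ℕ → ℝ≥0 := fun n => max (v (x (n + 1) - x n)) (r (n + 1))
  have hs : Antitone s := antitone_nat_of_succ_le fun n =>
    (max_le (hx (n + 1)).le (hr.antitone (n + 1).le_succ)).trans (le_max_right _ _)
  obtain ⟨c, hc⟩ := hsc.exists_forall_sub_le hs fun n => le_max_left _ _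
  exact ⟨c, fun n => (hc n).trans_lt (max_lt (hx n) (hr n.lt_succ_self))⟩

end SphericallyComplete

section Lift

variable {K : Type*} [Field K] {v : Valuation K ℝ≥0}

lemma maxIdealSubmodule.apply_mul_eq_mk
    (f : maxIdealSubmodule v →ₗ[v.integer] K ⧸ maxIdealSubmodule v) {y a b : K}
    (hy : v y < 1) (ha : v a ≤ 1) (hya : v (y * a) < 1)
    (hb : Submodule.Quotient.mk b = f ⟨y, hy⟩) :
    f ⟨y * a, hya⟩ = Submodule.Quotient.mk (a * b) := by
  calc f ⟨y * a, hya⟩ = f ((⟨a, ha⟩ : v.integer) • ⟨y, hy⟩) :=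
        congrArg f (Subtype.ext (mul_comm y a))
    _ = Submodule.Quotient.mk (a * b) := by rw [map_smul, ← hb]; rfl

theorem mkQ_comp_smul_subtype_eq {π : ℕ → K} (hπ1 : ∀ n, v (π n) < 1)
    (hπm : ∀ x, v x < 1 → ∃ n a, v a ≤ 1 ∧ x = π n * a)
    (f : maxIdealSubmodule v →ₗ[v.integer] K ⧸ maxIdealSubmodule v) {b : ℕ → K}
    (hb : ∀ n, Submodule.Quotient.mk (b n) = f ⟨π n, hπ1 n⟩) {c : K}
    (hc : ∀ n, v (c * π n - b n) < 1) :
    (maxIdealSubmodule v).mkQ ∘ₗ (c • (maxIdealSubmodule v).subtype) = f := by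
  refine LinearMap.ext fun ⟨y, hy⟩ => ?_
  obtain ⟨n, a, ha, rfl⟩ := hπm y hy
  rw [maxIdealSubmodule.apply_mul_eq_mk f (hπ1 n) ha hy (hb n)]
  refine (Submodule.Quotient.eq (maxIdealSubmodule v)).mpr ?_
  show v (c * (π n * a) - a * b n) < 1
  rw [show c * (π n * a) - a * b n = a * (c * π n - b n) by ring, map_mul]
  exact mul_lt_one_of_nonneg_of_lt_one_right ha zero_le (hc n)

theorem exists_lift_to_quotient_of_strictMono (hsc : SphericallyComplete v) (π : ℕ → K)
    (hπ0 : ∀ n, π n ≠ 0) (hπ1 : ∀ n, v (π n) < 1) (hmono : StrictMono fun n => v (π n))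
    (hπm : ∀ x, v x < 1 → ∃ n a, v a ≤ 1 ∧ x = π n * a)
    (f : maxIdealSubmodule v →ₗ[v.integer] K ⧸ maxIdealSubmodule v) :
    ∃ g : maxIdealSubmodule v →ₗ[v.integer] K, (maxIdealSubmodule v).mkQ ∘ₗ g = f := by
  choose b hb using fun n => Submodule.Quotient.mk_surjective _ (f ⟨π n, hπ1 n⟩)
  have hvπ : ∀ n, 0 < v (π n) := fun n => v.pos_iff.mpr (hπ0 n)
  have hcompat : ∀ n, v (b n - π n / π (n + 1) * b (n + 1)) < 1 := fun n => by
    have hu : v (π n / π (n + 1)) ≤ 1 := by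
      rw [map_div₀, div_le_one₀ (hvπ _)]
      exact (hmono n.lt_succ_self).le
    have hπu : π (n + 1) * (π n / π (n + 1)) = π n := mul_div_cancel₀ _ (hπ0 _)
    refine (Submodule.Quotient.eq (maxIdealSubmodule v)).mp ?_
    rw [hb n, ← maxIdealSubmodule.apply_mul_eq_mk f (hπ1 _) hu
      (by rw [hπu]; exact hπ1 n) (hb (n + 1))]
    exact congrArg f (Subtype.ext hπu.symm)
  have hstep : ∀ n, v (b (n + 1) / π (n + 1) - b n / π n) < (v (π n))⁻¹ := fun n =>
    calc v (b (n + 1) / π (n + 1) - b n / π n)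
        = v (b n - π n / π (n + 1) * b (n + 1)) * (v (π n))⁻¹ := by
          rw [← map_inv₀, ← map_mul, ← v.map_neg]
          congr 1
          field_simp [hπ0 n, hπ0 (n + 1)]
          ring
      _ < (v (π n))⁻¹ := mul_lt_of_lt_one_left (inv_pos.mpr (hvπ n)) (hcompat n)
  have hanti : StrictAnti fun n => (v (π n))⁻¹ := fun m n h =>
    (inv_lt_inv₀ (hvπ n) (hvπ m)).mpr (hmono h)
  obtain ⟨c, hc⟩ := hsc.exists_forall_sub_lt (x := fun n => b n / π n) hanti hstep
  refine ⟨c • (maxIdealSubmodule v).subtype, mkQ_comp_smul_subtype_eq hπ1 hπm f hb fun n => ?_⟩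
  calc v (c * π n - b n) = v (π n) * v (c - b n / π n) := by
        rw [← map_mul, mul_sub, mul_div_cancel₀ _ (hπ0 n), mul_comm]
    _ < v (π n) * (v (π n))⁻¹ := mul_lt_mul_of_pos_left (hc n) (hvπ n)
    _ = 1 := mul_inv_cancel₀ (hvπ n).ne'

end Lift

theorem lift_hom_to_quotient_general (p : ℕ) (hp : p.Prime) (K : Type*) [Field K]
    (v : Valuation K NNReal)
    (hsc : SphericallyComplete v)
    (π : ℕ → K)
    (hπ0 : 0 < v (π 0)) (hπ1 : v (π 0) < 1)
    (hπp : ∀ n, (π (n + 1)) ^ p = π n)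
    (hπm : ∀ x : K, v x < 1 ↔ ∃ n, ∃ a : K, v a ≤ 1 ∧ x = π n * a) :
    ∀ f : maxIdealSubmodule v →ₗ[v.integer] (K ⧸ maxIdealSubmodule v),
      ∃ g : maxIdealSubmodule v →ₗ[v.integer] K,
        (maxIdealSubmodule v).mkQ ∘ₗ g = f := by
  have hv : ∀ n, v (π (n + 1)) ^ p = v (π n) := fun n => by rw [← map_pow, hπp]
  have h0 : v (π 0) ∈ Set.Ioo 0 1 := ⟨hπ0, hπ1⟩
  have hIoo := NNReal.mem_Ioo_of_pow_succ_eq (a := fun n => v (π n)) hp.ne_zero hv h0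
  have hmono := NNReal.strictMono_of_pow_succ_eq (a := fun n => v (π n)) hp.one_lt hv h0
  exact exists_lift_to_quotient_of_strictMono hsc π (fun n => v.pos_iff.mp (hIoo n).1)
    (fun n => (hIoo n).2) hmono (fun x => (hπm x).mp)

/-- Let `p` be a prime and `K` a spherically complete field with a nontrivial
nonarchimedean multiplicative norm, with a compatible `p`-power root system of
pseudo-uniformizers generating `𝔪`.  Then every `K°`-linear map `f : 𝔪 → K/𝔪` lifts to a
`K°`-linear map `g : 𝔪 → K`. -/
theorem lift_hom_to_quotient (p : ℕ) (hp : p.Prime) (K : Type*) [Field K]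
    (v : Valuation K NNReal) (hnt : ∃ x : K, x ≠ 0 ∧ v x ≠ 1)
    (hsc : SphericallyComplete v)
    (π : ℕ → K) (hπint : ∀ n, v (π n) ≤ 1)
    (hπ0 : 0 < v (π 0)) (hπ1 : v (π 0) < 1)
    (hπp : ∀ n, (π (n + 1)) ^ p = π n)
    (hπm : ∀ x : K, v x < 1 ↔ ∃ n, ∃ a : K, v a ≤ 1 ∧ x = π n * a) :
    ∀ f : maxIdealSubmodule v →ₗ[v.integer] (K ⧸ maxIdealSubmodule v),
      ∃ g : maxIdealSubmodule v →ₗ[v.integer] K,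
        (maxIdealSubmodule v).mkQ ∘ₗ g = f :=
  lift_hom_to_quotient_general p hp K v hsc π hπ0 hπ1 hπp hπm
end

section
/- Let K be a field with a nontrivial nonarchimedean multiplicative norm ‖·‖ : K → ℝ≥0, let K° = {x ∈ K : ‖x‖ ≤ 1} be its valuation ring and 𝔪 = {x ∈ K : ‖x‖ < 1} its maximal ideal. Then Ext¹_{K°}(𝔪, K) = 0, where K is regarded as a K°-module via the inclusion K° ⊆ K (equivalently, every short exact sequence of K°-modules 0 → K → E → 𝔪 → 0 splits). -/
/-!
`K` is an injective `K°`-module, so every extension of `𝔪` by `K` splits. Injectivity is Baer's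
criterion: a linear map `g : I → K` on an ideal is determined by one value, since
`a • g x = x • g a` forces `g x = (g a / a) • x`, which visibly extends to all of `K°`.
-/

open LinearMap

theorem Module.Baer.of_field {R K : Type*} [CommRing R] [Field K] [Algebra R K]
    [FaithfulSMul R K] : Module.Baer R K := by
  intro I g
  by_cases hg : g = 0
  · exact ⟨0, fun x hx => by simp [hg]⟩
  obtain ⟨a, ha⟩ : ∃ a : I, g a ≠ 0 := by
    by_contra! h
    exact hg (LinearMap.ext h)
  have ha0 : algebraMap R K a ≠ 0 := by
    rw [map_ne_zero_iff _ (FaithfulSMul.algebraMap_injective R K)]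
    rintro h
    exact ha (by rw [show a = 0 from Subtype.ext h, map_zero])
  refine ⟨toSpanSingleton R K (g a / algebraMap R K a), fun x hx => ?_⟩
  have hcross : algebraMap R K a * g ⟨x, hx⟩ = algebraMap R K x * g a := by
    have h := congrArg g (show (a : R) • (⟨x, hx⟩ : I) = x • a from Subtype.ext (mul_comm _ _))
    rwa [map_smul, map_smul, Algebra.smul_def, Algebra.smul_def] at h
  rw [toSpanSingleton_apply, Algebra.smul_def]
  field_simp
  linear_combination -hcross

theorem Module.Baer.exists_section_of_exact {R Q N P : Type*} [CommRing R]
    [AddCommGroup Q] [AddCommGroup N] [AddCommGroup P] [Module R Q] [Module R N] [Module R P]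
    (hQ : Module.Baer R Q) {f : Q →ₗ[R] N} {g : N →ₗ[R] P} (hfg : Function.Exact f g)
    (hf : Function.Injective f) (hg : Function.Surjective g) :
    ∃ s : P →ₗ[R] N, g ∘ₗ s = LinearMap.id :=
  ((hfg.split_tfae hf hg).out 0 1).mpr (hQ.extension_property f hf LinearMap.id)

theorem ext_maxIdeal_field_eq_zero_general (K : Type*) [Field K]
    (v : Valuation K NNReal) :
    ∀ (E : Type*) [AddCommGroup E] [Module v.integer E]
      (i : K →ₗ[v.integer] E)
      (π' : E →ₗ[v.integer] maxIdealSubmodule v),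
      Function.Injective i → Function.Surjective π' →
      LinearMap.range i = LinearMap.ker π' →
      ∃ s : maxIdealSubmodule v →ₗ[v.integer] E, π' ∘ₗ s = LinearMap.id := by
  intro E _ _ i π' hi hπ hrange
  exact Module.Baer.of_field.exists_section_of_exact (LinearMap.exact_iff.mpr hrange.symm) hi hπ

/-- Let `K` be a field with a nontrivial nonarchimedean multiplicative norm, `K°` its
valuation ring and `𝔪` its maximal ideal.  Then `Ext¹_{K°}(𝔪, K) = 0`: every short exact
sequence of `K°`-modules `0 → K → E → 𝔪 → 0` splits. -/
theorem ext_maxIdeal_field_eq_zero (K : Type*) [Field K]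
    (v : Valuation K NNReal) (hnt : ∃ x : K, x ≠ 0 ∧ v x ≠ 1) :
    ∀ (E : Type*) [AddCommGroup E] [Module v.integer E]
      (i : K →ₗ[v.integer] E)
      (π' : E →ₗ[v.integer] maxIdealSubmodule v),
      Function.Injective i → Function.Surjective π' →
      LinearMap.range i = LinearMap.ker π' →
      ∃ s : maxIdealSubmodule v →ₗ[v.integer] E, π' ∘ₗ s = LinearMap.id :=
  ext_maxIdeal_field_eq_zero_general K v
end

section
/- Let p be a prime and let K be a field with a nontrivial nonarchimedean multiplicative norm ‖·‖ : K → ℝ≥0. Assume: (i) K is spherically complete (every chain of closed balls in K has nonempty intersection); (ii) the value group of K is p-divisible, i.e. for every nonzero x ∈ K there is y ∈ K with ‖y‖^p = ‖x‖; (iii) the residue field of K is perfect and of characteristic p, i.e. ‖p·1_K‖ < 1 and for every a ∈ K with ‖a‖ ≤ 1 there exists b ∈ K with ‖b‖ ≤ 1 and ‖a − b^p‖ < 1. Let ϖ ∈ K satisfy 0 < ‖ϖ‖ < 1 and ‖p·1_K‖ ≤ ‖ϖ‖^p. Then the p-power (Frobenius) map from K°/ϖK° to K°/ϖ^p K° is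 surjective; concretely, for every y ∈ K with ‖y‖ ≤ 1 there exists x ∈ K with ‖x‖ ≤ 1 and ‖y − x^p‖ ≤ ‖ϖ‖^p. -/
open NNReal

namespace Valuation

variable {K : Type*} [Field K] (v : Valuation K ℝ≥0)

def closedBall (c : K) (r : ℝ≥0) : Set K := {x | v (x - c) ≤ r}

variable {v}

theorem mem_closedBall {c x : K} {r : ℝ≥0} : x ∈ v.closedBall c r ↔ v (x - c) ≤ r := Iff.rfl

theorem closedBall_subset_closedBall {c c' : K} {r r' : ℝ≥0} (hc : c' ∈ v.closedBall c r)
    (hr : r' ≤ r) : v.closedBall c' r' ⊆ v.closedBall c r := fun x hx =>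
  calc v (x - c) = v ((x - c') + (c' - c)) := by rw [sub_add_sub_cancel]
    _ ≤ max (v (x - c')) (v (c' - c)) := v.map_add _ _
    _ ≤ r := max_le (le_trans hx hr) hc

theorem map_add_pow_sub_pow_sub_pow_le {p : ℕ} (hp : p.Prime) {x d : K} (hx : v x ≤ 1)
    (hd : v d ≤ 1) : v ((x + d) ^ p - x ^ p - d ^ p) ≤ v p := by
  -- taken in the subring `v.integer`, the cofactor `r` has valuation at most one
  obtain ⟨r, hr⟩ := exists_add_pow_prime_eq hp (⟨x, hx⟩ : v.integer) ⟨d, hd⟩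
  have hcross : (x + d) ^ p - x ^ p - d ^ p = p * x * d * r := by
    have := congrArg Subtype.val hr
    push_cast at this
    linear_combination this
  rw [hcross, map_mul, map_mul, map_mul]
  calc v p * v x * v d * v r ≤ v p * 1 * 1 * 1 := by gcongr; exact r.2
    _ = v p := by ring

end Valuation

open Valuation

theorem SphericallyComplete.exists_forall_le_radius {K : Type*} [Field K] {v : Valuation K ℝ≥0}
    (hsc : SphericallyComplete v) {S : Set K} (hS : S.Nonempty) {ρ : K → ℝ≥0}
    (hρ : ∀ x ∈ S, ∀ x' ∈ v.closedBall x (ρ x), x' ∈ S ∧ ρ x' ≤ ρ x) :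
    ∃ x ∈ S, ∀ x' ∈ v.closedBall x (ρ x), ρ x ≤ ρ x' := by
  have hnest : ∀ x ∈ S, ∀ x' ∈ v.closedBall x (ρ x),
      v.closedBall x' (ρ x') ⊆ v.closedBall x (ρ x) := fun x hx x' hx' =>
    closedBall_subset_closedBall hx' (hρ x hx x' hx').2
  let R : S → S → Prop := fun a b => (b : K) ∈ v.closedBall a (ρ a)
  have htrans : ∀ {a b c : S}, R a b → R b c → R a c := fun {a b _} hab hbc =>
    hnest a a.2 b hab hbc
  have hbounded : ∀ c : Set S, IsChain R c → ∃ ub, ∀ a ∈ c, R a ub := by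
    intro c hc
    obtain rfl | ⟨a₀, ha₀⟩ := c.eq_empty_or_nonempty
    · exact ⟨⟨_, hS.some_mem⟩, by simp⟩
    have hballs : IsChain (· ⊆ ·) ((fun a : S => v.closedBall a (ρ a)) '' c) :=
      hc.symm.image_of_map_rel _ _ (fun a : S => v.closedBall a (ρ a))
        fun a b hab => hnest b b.2 a hab
    obtain ⟨w, hw⟩ := hsc _ (by rintro _ ⟨a, -, rfl⟩; exact ⟨a, ρ a, rfl⟩) hballs
    have hwc : ∀ a ∈ c, w ∈ v.closedBall a (ρ a) := fun a ha => hw _ ⟨a, ha, rfl⟩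
    exact ⟨⟨w, (hρ a₀ a₀.2 w (hwc a₀ ha₀)).1⟩, hwc⟩
  obtain ⟨m, hm⟩ := exists_maximal_of_chains_bounded hbounded htrans
  refine ⟨m, m.2, fun x' hx' => ?_⟩
  have hx'S := (hρ m m.2 x' hx').1
  exact (hρ x' hx'S m (hm ⟨x', hx'S⟩ hx')).2

section Frobenius

variable {K : Type*} [Field K] {v : Valuation K ℝ≥0} {p : ℕ}

theorem map_sub_add_pow_le (hp : p.Prime) {y x d : K} (hx : v x ≤ 1) (hd : v d ≤ 1)
    (hpy : v p ≤ v (y - x ^ p)) (hdy : v d ^ p ≤ v (y - x ^ p)) :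
    v (y - (x + d) ^ p) ≤ v (y - x ^ p) := by
  rw [show y - (x + d) ^ p = (y - x ^ p) - ((x + d) ^ p - x ^ p - d ^ p) - d ^ p by ring]
  refine (v.map_sub _ _).trans (max_le ((v.map_sub _ _).trans (max_le le_rfl ?_)) ?_)
  · exact (map_add_pow_sub_pow_sub_pow_le hp hx hd).trans hpy
  · rwa [map_pow]

theorem exists_map_sub_add_pow_lt (hp : p.Prime)
    (hdiv : ∀ x : K, x ≠ 0 → ∃ y : K, (v y) ^ p = v x)
    (hperf : ∀ a : K, v a ≤ 1 → ∃ b : K, v b ≤ 1 ∧ v (a - b ^ p) < 1) {y x : K} (hx : v x ≤ 1)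
    (hy : v (y - x ^ p) ≤ 1) (hpy : v p < v (y - x ^ p)) :
    ∃ d, v d ^ p ≤ v (y - x ^ p) ∧ v (y - (x + d) ^ p) < v (y - x ^ p) := by
  set e := y - x ^ p
  have he : v e ≠ 0 := (pos_of_gt hpy).ne'
  obtain ⟨t, ht⟩ := hdiv e (by rintro h; simp [h] at he)
  have ht0 : t ≠ 0 := by
    rintro rfl
    rw [map_zero, zero_pow hp.ne_zero] at ht
    exact he ht.symm
  obtain ⟨b, hb, hbz⟩ := hperf (e / t ^ p) (by rw [map_div₀, map_pow, ht, div_self he])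
  have htb : v (t * b) ≤ v t := by rw [map_mul]; exact mul_le_of_le_one_right' hb
  have ht1 : v t ≤ 1 := (pow_le_one_iff hp.ne_zero).1 (ht ▸ hy)
  refine ⟨t * b, ht ▸ pow_le_pow_left' htb p, ?_⟩
  have hsplit : y - (x + t * b) ^ p
      = t ^ p * (e / t ^ p - b ^ p) - ((x + t * b) ^ p - x ^ p - (t * b) ^ p) := by
    field_simp
    ring
  rw [hsplit]
  refine (v.map_sub _ _).trans_lt (max_lt ?_ ?_)
  · rw [map_mul, map_pow, ht]
    exact mul_lt_of_lt_one_right (pos_of_gt hpy) hbz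
  · exact (map_add_pow_sub_pow_sub_pow_le hp hx (htb.trans ht1)).trans_lt hpy

theorem exists_map_sub_pow_le_of_sphericallyComplete (hp : p.Prime)
    (hsc : SphericallyComplete v) (hdiv : ∀ x : K, x ≠ 0 → ∃ y : K, (v y) ^ p = v x)
    (hperf : ∀ a : K, v a ≤ 1 → ∃ b : K, v b ≤ 1 ∧ v (a - b ^ p) < 1) {s : ℝ≥0}
    (hs : v p ≤ s) {y : K} (hy : v y ≤ 1) : ∃ x, v x ≤ 1 ∧ v (y - x ^ p) ≤ s := by
  by_contra! hfar
  have hp0 : (0 : ℝ) < p := by exact_mod_cast hp.pos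
  have herr : ∀ x, v x ≤ 1 → v (y - x ^ p) ≤ 1 := fun x hx =>
    (v.map_sub _ _).trans (max_le hy (by rw [map_pow]; exact pow_le_one' hx p))
  set ρ : K → ℝ≥0 := fun x => v (y - x ^ p) ^ (p : ℝ)⁻¹
  have mem_ball : ∀ {x d : K}, x + d ∈ v.closedBall x (ρ x) ↔ v d ^ p ≤ v (y - x ^ p) := by
    intro x d
    rw [mem_closedBall, add_sub_cancel_left, NNReal.le_rpow_inv_iff hp0, NNReal.rpow_natCast]
  have hρ : ∀ x ∈ {x | v x ≤ 1}, ∀ x' ∈ v.closedBall x (ρ x), v x' ≤ 1 ∧ ρ x' ≤ ρ x := by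
    intro x hx x' hx'
    obtain ⟨d, rfl⟩ : ∃ d, x' = x + d := ⟨x' - x, by ring⟩
    rw [mem_ball] at hx'
    have hd : v d ≤ 1 := (pow_le_one_iff hp.ne_zero).1 (hx'.trans (herr x hx))
    refine ⟨(v.map_add _ _).trans (max_le hx hd), NNReal.rpow_le_rpow ?_ (by positivity)⟩
    exact map_sub_add_pow_le hp hx hd (hs.trans (hfar x hx).le) hx'
  obtain ⟨m, hm, hmin⟩ := hsc.exists_forall_le_radius ⟨0, by simp⟩ hρ
  obtain ⟨d, hd, hlt⟩ :=
    exists_map_sub_add_pow_lt hp hdiv hperf hm (herr m hm) (hs.trans_lt (hfar m hm))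
  exact (hmin (m + d) (mem_ball.2 hd)).not_gt (NNReal.rpow_lt_rpow hlt (by positivity))

end Frobenius

theorem frobenius_surjective_of_sphericallyComplete_general (p : ℕ) (hp : p.Prime)
    (K : Type*) [Field K] (v : Valuation K NNReal)
    (hsc : SphericallyComplete v)
    (hdiv : ∀ x : K, x ≠ 0 → ∃ y : K, (v y) ^ p = v x)
    (hperf : ∀ a : K, v a ≤ 1 → ∃ b : K, v b ≤ 1 ∧ v (a - b ^ p) < 1)
    (ϖ : K) (hϖp : v (p : K) ≤ (v ϖ) ^ p) :
    ∀ y : K, v y ≤ 1 → ∃ x : K, v x ≤ 1 ∧ v (y - x ^ p) ≤ (v ϖ) ^ p :=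
  fun _ hy => exists_map_sub_pow_le_of_sphericallyComplete hp hsc hdiv hperf hϖp hy

/-- Let `p` be a prime and `K` a spherically complete field with a nontrivial
nonarchimedean multiplicative norm `v`, whose value group is `p`-divisible and whose
residue field is perfect of characteristic `p`.  Let `ϖ` satisfy `0 < v ϖ < 1` and
`v p ≤ (v ϖ)^p`.  Then the Frobenius `K°/ϖ → K°/ϖ^p` is surjective: for every `y` with
`v y ≤ 1` there is `x` with `v x ≤ 1` and `v (y - x^p) ≤ (v ϖ)^p`. -/
theorem frobenius_surjective_of_sphericallyComplete (p : ℕ) (hp : p.Prime)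
    (K : Type*) [Field K] (v : Valuation K NNReal)
    (hnt : ∃ x : K, x ≠ 0 ∧ v x ≠ 1)
    (hsc : SphericallyComplete v)
    (hdiv : ∀ x : K, x ≠ 0 → ∃ y : K, (v y) ^ p = v x)
    (hcharp : v (p : K) < 1)
    (hperf : ∀ a : K, v a ≤ 1 → ∃ b : K, v b ≤ 1 ∧ v (a - b ^ p) < 1)
    (ϖ : K) (hϖ0 : 0 < v ϖ) (hϖ1 : v ϖ < 1) (hϖp : v (p : K) ≤ (v ϖ) ^ p) :
    ∀ y : K, v y ≤ 1 → ∃ x : K, v x ≤ 1 ∧ v (y - x ^ p) ≤ (v ϖ) ^ p :=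
  frobenius_surjective_of_sphericallyComplete_general p hp K v hsc hdiv hperf ϖ hϖp
end

section
/- Let p be a prime and let K be a field with a nontrivial nonarchimedean multiplicative norm ‖·‖ : K → ℝ≥0. Assume the value group of K is p-divisible (for every nonzero x ∈ K there is z ∈ K with ‖z‖^p = ‖x‖) and the residue field of K is perfect (for every a ∈ K with ‖a‖ ≤ 1 there exists b ∈ K with ‖b‖ ≤ 1 and ‖a − b^p‖ < 1). Then every nonzero x ∈ K with ‖x‖ ≤ 1 can be written as x = y^p·(1 + u) with y, u ∈ K, ‖y‖ ≤ 1 and ‖u‖ < 1. -/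
/-!
Extract a `p`-th root `z` of the value of `x`; then `a = x / z ^ p` is a unit of the valuation
ring. Perfectness of the residue field gives `b` with `b ^ p ≡ a` modulo the maximal ideal, and
an element congruent to `b ^ p` modulo elements of smaller value is `b ^ p` times a principal unit.
-/

namespace Valuation

variable {K Γ₀ : Type*} [Field K] [LinearOrderedCommGroupWithZero Γ₀] (v : Valuation K Γ₀)

theorem exists_eq_mul_one_add_of_map_sub_lt {a c : K} (h : v (a - c) < v a) :
    ∃ u, v u < 1 ∧ a = c * (1 + u) := by
  have hvc : v c = v a := v.map_eq_of_sub_lt (by rwa [← neg_sub, map_neg])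
  have hc : c ≠ 0 := v.ne_zero_iff.mp (hvc ▸ (zero_le.trans_lt h).ne')
  refine ⟨(a - c) / c, ?_, by field_simp; ring⟩
  rwa [map_div, hvc, div_lt_one₀ (zero_le.trans_lt h)]

theorem ne_zero_and_map_div_pow_eq_one {x z : K} {n : ℕ} (hx : x ≠ 0) (hn : n ≠ 0) (hz : v z ^ n = v x) :
    z ≠ 0 ∧ v (x / z ^ n) = 1 := by
  have hvx : v x ≠ 0 := v.ne_zero_iff.mpr hx
  have hz0 : z ≠ 0 := by
    rintro rfl
    exact hvx (by rw [← hz, map_zero, zero_pow hn])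
  exact ⟨hz0, by rw [map_div, map_pow, hz, div_self hvx]⟩

end Valuation

theorem exists_pth_power_decomposition_general (p : ℕ) (hp : p.Prime)
    (K : Type*) [Field K] (v : Valuation K NNReal)
    (hdiv : ∀ x : K, x ≠ 0 → ∃ z : K, (v z) ^ p = v x)
    (hperf : ∀ a : K, v a ≤ 1 → ∃ b : K, v b ≤ 1 ∧ v (a - b ^ p) < 1) :
    ∀ x : K, x ≠ 0 → v x ≤ 1 →
      ∃ y u : K, v y ≤ 1 ∧ v u < 1 ∧ x = y ^ p * (1 + u) := by
  intro x hx hx1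
  obtain ⟨z, hz⟩ := hdiv x hx
  obtain ⟨hz0, hva⟩ := v.ne_zero_and_map_div_pow_eq_one hx hp.ne_zero hz
  obtain ⟨b, hb1, hab⟩ := hperf (x / z ^ p) hva.le
  obtain ⟨u, hu, hxb⟩ := v.exists_eq_mul_one_add_of_map_sub_lt (hva ▸ hab)
  have hz1 : v z ≤ 1 := (pow_le_one_iff hp.ne_zero).mp (hz ▸ hx1)
  refine ⟨z * b, u, ?_, hu, ?_⟩
  · rw [map_mul]
    exact mul_le_one' hz1 hb1
  · rw [div_eq_iff (pow_ne_zero p hz0)] at hxb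
    rw [hxb, mul_pow]
    ring

/-- Let `p` be a prime and `K` a field with a nontrivial nonarchimedean multiplicative
norm `v` whose value group is `p`-divisible and whose residue field is perfect.  Then
every nonzero `x` with `v x ≤ 1` can be written as `x = y^p * (1 + u)` with `v y ≤ 1`
and `v u < 1`. -/
theorem exists_pth_power_decomposition (p : ℕ) (hp : p.Prime)
    (K : Type*) [Field K] (v : Valuation K NNReal)
    (hnt : ∃ x : K, x ≠ 0 ∧ v x ≠ 1)
    (hdiv : ∀ x : K, x ≠ 0 → ∃ z : K, (v z) ^ p = v x)
    (hperf : ∀ a : K, v a ≤ 1 → ∃ b : K, v b ≤ 1 ∧ v (a - b ^ p) < 1) :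
    ∀ x : K, x ≠ 0 → v x ≤ 1 →
      ∃ y u : K, v y ≤ 1 ∧ v u < 1 ∧ x = y ^ p * (1 + u) :=
  exists_pth_power_decomposition_general p hp K v hdiv hperf
end

section
/- Let p be a prime and let K be a field with a nontrivial nonarchimedean multiplicative norm ‖·‖ : K → ℝ≥0 that is spherically complete (every chain of closed balls in K has nonempty intersection). Let K° = {x ∈ K : ‖x‖ ≤ 1}, and let ϖ ∈ K° satisfy 0 < ‖ϖ‖ < 1 and ‖p·1_K‖ ≤ ‖ϖ‖^p. Then there exists an additive map σ : K°/ϖ^p K° → K°/ϖ K° such that for all x, y ∈ K°: σ((x^p·y) mod ϖ^p) = (x mod ϖ)·σ(y mod ϖ^p), and σ(x^p mod ϖ^p) = x mod ϖ. -/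
section Aux

variable {K : Type*} [Field K] (v : Valuation K NNReal)

lemma aux_mem_span (ϖ x : v.integer) :
    x ∈ Ideal.span {ϖ} ↔ v (x : K) ≤ v (ϖ : K) := by
  rw [Ideal.mem_span_singleton, (Valuation.integer.integers v).dvd_iff_le]
  rfl

set_option synthInstance.maxHeartbeats 1000000 in
set_option maxHeartbeats 2000000 in
lemma baer_aux (hsc : SphericallyComplete v) (ϖ : v.integer)
    (hϖ0 : 0 < v (ϖ : K)) (hϖ1 : v (ϖ : K) < 1) :
    Module.Baer (v.integer ⧸ (Ideal.span {ϖ} : Ideal v.integer))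
      (v.integer ⧸ (Ideal.span {ϖ} : Ideal v.integer)) := by
  classical
  intro I f
  set mk : v.integer →+* v.integer ⧸ (Ideal.span {ϖ} : Ideal v.integer) :=
    Ideal.Quotient.mk (Ideal.span {ϖ} : Ideal v.integer) with hmkdef
  have hsurj : Function.Surjective mk := Ideal.Quotient.mk_surjective
  -- choose lifts of values of f
  have hbex : ∀ a : v.integer, ∃ c : v.integer, ∀ h : mk a ∈ I, mk c = f ⟨mk a, h⟩ := by
    intro a
    by_cases h : mk a ∈ I
    · obtain ⟨c, hc⟩ := hsurj (f ⟨mk a, h⟩)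
      exact ⟨c, fun _ => hc⟩
    · exact ⟨0, fun h' => absurd h' h⟩
  choose b hb using hbex
  -- semilinearity of the lifts
  have hlin : ∀ (a : v.integer) (h : mk a ∈ I) (t : v.integer) (h' : mk (t * a) ∈ I),
      mk (t * b a) = f ⟨mk (t * a), h'⟩ := by
    intro a h t h'
    have e : (⟨mk (t * a), h'⟩ : I) = (mk t) • (⟨mk a, h⟩ : I) := by
      ext
      simp [smul_eq_mul, map_mul]
    calc mk (t * b a) = mk t * mk (b a) := map_mul _ _ _
      _ = mk t • f ⟨mk a, h⟩ := by rw [hb a h, smul_eq_mul]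
      _ = f ((mk t) • ⟨mk a, h⟩) := (map_smul f _ _).symm
      _ = f ⟨mk (t * a), h'⟩ := by rw [e]
  -- norm bound on the lifts
  have hbd : ∀ a : v.integer, mk a ∈ I → v (ϖ : K) < v (a : K) → v (b a : K) ≤ v (a : K) := by
    intro a h ha
    have ha0 : (a : K) ≠ 0 := by
      intro h0
      rw [h0, map_zero] at ha
      exact absurd (hϖ0.trans ha) (lt_irrefl _)
    have ht : (ϖ : K) / a ∈ v.integer := by
      rw [Valuation.mem_integer_iff, map_div₀]
      exact div_le_one_of_le₀ ha.le bot_le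
    set t : v.integer := ⟨(ϖ : K) / a, ht⟩ with htdef
    have hta : t * a = ϖ := Subtype.ext (div_mul_cancel₀ _ ha0)
    have hz : mk (t * a) = 0 := by
      rw [hta, hmkdef, Ideal.Quotient.eq_zero_iff_mem]
      exact Ideal.mem_span_singleton_self ϖ
    have h' : mk (t * a) ∈ I := by rw [hz]; exact I.zero_mem
    have h0 : mk (t * b a) = 0 := by
      rw [hlin a h t h']
      have e : (⟨mk (t * a), h'⟩ : I) = 0 := Subtype.ext hz
      rw [e, map_zero]
    have hmem : t * b a ∈ Ideal.span {ϖ} := by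
      rwa [hmkdef, Ideal.Quotient.eq_zero_iff_mem] at h0
    rw [aux_mem_span] at hmem
    have : v ((t : K) * (b a : K)) ≤ v (ϖ : K) := hmem
    rw [map_mul] at this
    have ht' : v (t : K) = v (ϖ : K) / v (a : K) := by
      rw [htdef]
      exact map_div₀ v _ _
    rw [ht', div_mul_eq_mul_div, div_le_iff₀ (hϖ0.trans ha)] at this
    exact le_of_mul_le_mul_left (by simpa [mul_comm] using this) hϖ0
  by_cases hI0 : ∀ a : v.integer, mk a ∈ I → v (a : K) ≤ v (ϖ : K)
  · -- the ideal is trivial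
    refine ⟨LinearMap.toSpanSingleton _ _ 0, fun x hx => ?_⟩
    obtain ⟨a, rfl⟩ := hsurj x
    have hma : mk a = 0 := by
      rw [hmkdef, Ideal.Quotient.eq_zero_iff_mem, aux_mem_span]
      exact hI0 a hx
    have e : (⟨mk a, hx⟩ : I) = 0 := Subtype.ext hma
    rw [LinearMap.toSpanSingleton_apply, smul_zero, e, map_zero]
  · push_neg at hI0
    obtain ⟨a₀, ha₀I, ha₀⟩ := hI0
    set 𝒞 : Set (Set K) := {S | ∃ a : v.integer, mk a ∈ I ∧ v (ϖ:K) < v (a:K) ∧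
      S = {x : K | v (x - (b a : K) / (a : K)) ≤ v (ϖ:K) / v (a:K)}} with h𝒞
    have hsub : ∀ a a' : v.integer, mk a ∈ I → mk a' ∈ I →
        v (ϖ:K) < v (a:K) → v (ϖ:K) < v (a':K) → v ((a':K)) ≤ v ((a:K)) →
        {x : K | v (x - (b a : K) / (a:K)) ≤ v (ϖ:K) / v (a:K)} ⊆
        {x : K | v (x - (b a' : K) / (a':K)) ≤ v (ϖ:K) / v (a':K)} := by
      intro a a' h h' haϖ ha'ϖ hle x hx
      have ha0 : (a : K) ≠ 0 := v.ne_zero_iff.mp (hϖ0.trans haϖ).ne'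
      have ha'0 : (a' : K) ≠ 0 := v.ne_zero_iff.mp (hϖ0.trans ha'ϖ).ne'
      have hu : (a' : K) / a ∈ v.integer := by
        rw [Valuation.mem_integer_iff, map_div₀]
        exact div_le_one_of_le₀ hle bot_le
      set u : v.integer := ⟨(a' : K) / a, hu⟩ with hudef
      have hua : u * a = a' := Subtype.ext (div_mul_cancel₀ _ ha0)
      have h'' : mk (u * a) ∈ I := by rw [hua]; exact h'
      have h1 : mk (u * b a) = mk (b a') := by
        rw [hlin a h u h'', hb a' h']
        exact congrArg f (Subtype.ext (congrArg (fun z => mk z) hua))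
      have h2 : v ((b a' : K) - (u : K) * (b a : K)) ≤ v (ϖ : K) := by
        have h2' := Ideal.Quotient.eq.mp h1.symm
        rw [aux_mem_span] at h2'
        simpa using h2'
      have hcent : (b a' : K)/(a':K) - (b a : K)/(a:K)
          = ((b a' : K) - (u : K) * (b a : K))/(a':K) := by
        rw [hudef]
        field_simp
      have h3 : v ((b a' : K)/(a':K) - (b a : K)/(a:K)) ≤ v (ϖ:K) / v ((a':K)) := by
        rw [hcent, map_div₀]
        gcongr
      have hxe : x - (b a' : K)/(a':K)
          = (x - (b a : K)/(a:K)) + ((b a : K)/(a:K) - (b a' : K)/(a':K)) := by ring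
      rw [Set.mem_setOf_eq, hxe]
      refine le_trans (v.map_add _ _) (max_le ?_ ?_)
      · refine le_trans hx ?_
        rw [div_le_div_iff₀ (hϖ0.trans haϖ) (hϖ0.trans ha'ϖ)]
        exact mul_le_mul_right hle _
      · rw [v.map_sub_swap]
        exact h3
    obtain ⟨c₀, hc₀⟩ := hsc 𝒞
      (by rintro S ⟨a, _, _, rfl⟩; exact ⟨_, _, rfl⟩)
      (by
        rintro S ⟨a, ha, haϖ, rfl⟩ S' ⟨a', ha', ha'ϖ, rfl⟩ _
        rcases le_total (v ((a':K))) (v ((a:K))) with hle | hle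
        · exact Or.inl (hsub a a' ha ha' haϖ ha'ϖ hle)
        · exact Or.inr (hsub a' a ha' ha ha'ϖ haϖ hle))
    have hc₀a : ∀ a : v.integer, mk a ∈ I → v (ϖ:K) < v (a:K) →
        v (c₀ - (b a : K)/(a:K)) ≤ v (ϖ:K) / v (a:K) := by
      intro a ha haϖ
      exact hc₀ _ ⟨a, ha, haϖ, rfl⟩
    have hc₀int : c₀ ∈ v.integer := by
      rw [Valuation.mem_integer_iff]
      have h1 := hc₀a a₀ ha₀I ha₀
      have hxe : c₀ = (c₀ - (b a₀:K)/(a₀:K)) + (b a₀:K)/(a₀:K) := by ring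
      rw [hxe]
      refine le_trans (v.map_add _ _) (max_le ?_ ?_)
      · refine le_trans h1 ?_
        exact div_le_one_of_le₀ ha₀.le bot_le
      · rw [map_div₀]
        exact div_le_one_of_le₀ (hbd a₀ ha₀I ha₀) bot_le
    set c : v.integer := ⟨c₀, hc₀int⟩ with hcdef
    refine ⟨LinearMap.toSpanSingleton _ _ (mk c), fun x hx => ?_⟩
    obtain ⟨a, rfl⟩ := hsurj x
    rw [LinearMap.toSpanSingleton_apply, smul_eq_mul]
    by_cases hcase : v (a:K) ≤ v (ϖ:K)
    · have hma : mk a = 0 := by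
        rw [hmkdef, Ideal.Quotient.eq_zero_iff_mem, aux_mem_span]
        exact hcase
      have e : (⟨mk a, hx⟩ : I) = 0 := Subtype.ext hma
      rw [e, map_zero, hma, zero_mul]
    · push_neg at hcase
      have ha0 : (a : K) ≠ 0 := v.ne_zero_iff.mp (hϖ0.trans hcase).ne'
      have h1 := hc₀a a hx hcase
      have h2 : v ((a:K) * c₀ - (b a:K)) ≤ v (ϖ:K) := by
        have e : (a:K) * c₀ - (b a:K) = (c₀ - (b a:K)/(a:K)) * (a:K) := by
          field_simp
        rw [e, map_mul]
        calc v (c₀ - (b a:K)/(a:K)) * v ((a:K)) ≤ (v (ϖ:K) / v ((a:K))) * v ((a:K)) :=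
              mul_le_mul_left h1 _
          _ = v (ϖ:K) := div_mul_cancel₀ _ (hϖ0.trans hcase).ne'
      rw [← map_mul, ← hb a hx, hmkdef, Ideal.Quotient.eq]
      rw [aux_mem_span]
      have e : ((a * c - b a : v.integer) : K) = (a:K) * c₀ - (b a:K) := by
        push_cast
        rfl
      rw [e]
      exact h2

end Aux

set_option synthInstance.maxHeartbeats 1000000 in
set_option maxHeartbeats 2000000 in
/-- Let `p` be a prime and `K` a spherically complete field with a nontrivial
nonarchimedean multiplicative norm `v`.  Let `ϖ ∈ K°` satisfy `0 < v ϖ < 1` and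
`v p ≤ (v ϖ)^p`.  Then there is an additive map `σ : K°/ϖ^p → K°/ϖ` satisfying
`σ(x^p y) = x σ(y)` and `σ(x^p) = x`. -/
theorem exists_frobenius_section (p : ℕ) (hp : p.Prime)
    (K : Type*) [Field K] (v : Valuation K NNReal)
    (hnt : ∃ x : K, x ≠ 0 ∧ v x ≠ 1)
    (hsc : SphericallyComplete v)
    (ϖ : v.integer) (hϖ0 : 0 < v (ϖ : K)) (hϖ1 : v (ϖ : K) < 1)
    (hϖp : v (p : K) ≤ (v (ϖ : K)) ^ p) :
    ∃ σ : (v.integer ⧸ (Ideal.span {ϖ ^ p} : Ideal v.integer)) →+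
        (v.integer ⧸ (Ideal.span {ϖ} : Ideal v.integer)),
      (∀ x y : v.integer,
        σ (Ideal.Quotient.mk (Ideal.span {ϖ ^ p}) (x ^ p * y)) =
          Ideal.Quotient.mk (Ideal.span {ϖ}) x *
            σ (Ideal.Quotient.mk (Ideal.span {ϖ ^ p}) y)) ∧
      (∀ x : v.integer,
        σ (Ideal.Quotient.mk (Ideal.span {ϖ ^ p}) (x ^ p)) =
          Ideal.Quotient.mk (Ideal.span {ϖ}) x) := by
  classical
  haveI : Fact p.Prime := ⟨hp⟩
  have hcoepow : ∀ (x : v.integer) (n : ℕ), ((x ^ n : v.integer) : K) = (x : K) ^ n := by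
    intro x n
    push_cast
    ring
  have hπppow : v ((ϖ ^ p : v.integer) : K) = v (ϖ : K) ^ p := by
    rw [hcoepow, map_pow]
  -- the quotient mod ϖ^p is nontrivial of characteristic p
  haveI : Nontrivial (v.integer ⧸ (Ideal.span {ϖ ^ p} : Ideal v.integer)) := by
    refine Ideal.Quotient.nontrivial_iff.mpr ?_
    rw [Ne, Ideal.span_singleton_eq_top,
      (Valuation.integer.integers v).isUnit_iff_valuation_eq_one]
    intro h1
    have h2 : v ((ϖ ^ p : v.integer) : K) < 1 := by
      rw [hπppow]
      exact pow_lt_one₀ bot_le hϖ1 hp.ne_zero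
    have h1' : v ((ϖ ^ p : v.integer) : K) = 1 := h1
    rw [h1'] at h2
    exact absurd h2 (lt_irrefl _)
  have hp0 : ((p : ℕ) : v.integer ⧸ (Ideal.span {ϖ ^ p} : Ideal v.integer)) = 0 := by
    rw [← map_natCast (Ideal.Quotient.mk (Ideal.span {ϖ ^ p} : Ideal v.integer)),
      Ideal.Quotient.eq_zero_iff_mem, aux_mem_span, hπppow]
    calc v (((p : ℕ) : v.integer) : K) = v ((p : ℕ) : K) := by push_cast; rfl
      _ ≤ v (ϖ : K) ^ p := hϖp
  haveI : CharP (v.integer ⧸ (Ideal.span {ϖ ^ p} : Ideal v.integer)) p :=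
    (CharP.charP_iff_prime_eq_zero hp).mpr hp0
  -- the Frobenius lift φ : O/ϖ → O/ϖᵖ
  have hker : ∀ a : v.integer, a ∈ (Ideal.span {ϖ} : Ideal v.integer) →
      ((frobenius _ p).comp
        (Ideal.Quotient.mk (Ideal.span {ϖ ^ p} : Ideal v.integer))) a = 0 := by
    intro a ha
    rw [RingHom.comp_apply, frobenius_def, ← map_pow, Ideal.Quotient.eq_zero_iff_mem]
    rw [Ideal.mem_span_singleton] at ha
    rw [Ideal.mem_span_singleton]
    exact pow_dvd_pow_of_dvd ha p
  set φ : (v.integer ⧸ (Ideal.span {ϖ} : Ideal v.integer)) →+*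
      (v.integer ⧸ (Ideal.span {ϖ ^ p} : Ideal v.integer)) :=
    Ideal.Quotient.lift _ ((frobenius _ p).comp
      (Ideal.Quotient.mk (Ideal.span {ϖ ^ p} : Ideal v.integer))) hker with hφ
  have hφmk : ∀ x : v.integer, φ (Ideal.Quotient.mk (Ideal.span {ϖ}) x)
      = Ideal.Quotient.mk (Ideal.span {ϖ ^ p}) (x ^ p) := by
    intro x
    rw [hφ, Ideal.Quotient.lift_mk, RingHom.comp_apply, frobenius_def, ← map_pow]
  letI : Algebra (v.integer ⧸ (Ideal.span {ϖ} : Ideal v.integer))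
      (v.integer ⧸ (Ideal.span {ϖ ^ p} : Ideal v.integer)) := φ.toAlgebra
  haveI : Module.Injective (v.integer ⧸ (Ideal.span {ϖ} : Ideal v.integer))
      (v.integer ⧸ (Ideal.span {ϖ} : Ideal v.integer)) :=
    (baer_aux v hsc ϖ hϖ0 hϖ1).injective
  set ι := Algebra.linearMap (v.integer ⧸ (Ideal.span {ϖ} : Ideal v.integer))
      (v.integer ⧸ (Ideal.span {ϖ ^ p} : Ideal v.integer)) with hι
  have hιmk : ∀ x : v.integer, ι (Ideal.Quotient.mk (Ideal.span {ϖ}) x)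
      = Ideal.Quotient.mk (Ideal.span {ϖ ^ p}) (x ^ p) := by
    intro x
    rw [hι, Algebra.linearMap_apply, RingHom.algebraMap_toAlgebra, hφmk]
  have hinj : Function.Injective ι := by
    rw [injective_iff_map_eq_zero]
    intro z hz
    obtain ⟨x, rfl⟩ := Ideal.Quotient.mk_surjective z
    rw [hιmk, Ideal.Quotient.eq_zero_iff_mem, aux_mem_span, hπppow, hcoepow, map_pow] at hz
    rw [Ideal.Quotient.eq_zero_iff_mem, aux_mem_span]
    exact le_of_pow_le_pow_left₀ hp.ne_zero bot_le hz
  obtain ⟨σ', hσ'⟩ := Module.Injective.out ι hinj LinearMap.id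
  refine ⟨σ'.toAddMonoidHom, ?_, ?_⟩
  · intro x y
    have e : Ideal.Quotient.mk (Ideal.span {ϖ ^ p} : Ideal v.integer) (x ^ p * y)
        = (Ideal.Quotient.mk (Ideal.span {ϖ}) x) •
          (Ideal.Quotient.mk (Ideal.span {ϖ ^ p}) y) := by
      rw [Algebra.smul_def, RingHom.algebraMap_toAlgebra, hφmk, ← map_mul]
    show σ' _ = _ * σ' _
    rw [e, map_smul, smul_eq_mul]
  · intro x
    show σ' _ = _
    rw [← hιmk, hσ', LinearMap.id_apply]
end
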